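/- arXiv:1903.09183 — 7 statements merged into one kernel-verified Lean document; each statement's English description precedes it below -/
import Mathlib

section
/- The sorting map rank : Δ → Δ, which rearranges a summable nonnegative sequence into nonincreasing order, is a non-strict contraction with respect to the ℓ¹ metric: for all x, y ∈ Δ, ‖rank(x) − rank(y)‖₁ ≤ ‖x − y‖₁. -/
/-!
With `m = min x y` pointwise, `|a - b| = a + b - 2 min a b` gives
`‖x - y‖₁ = ∑ x + ∑ y - 2 ∑ m`, and likewise for the rearrangements. Sorting preserves the
sum of a nonnegative summable sequence: `{n | t < rank x n}` and `{i | t < x i}` have the same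
cardinality for every level `t`, so the layer-cake formula for the counting measure applies.
Since `m ≤ x` and `m ≤ y`, monotonicity of sorting gives `rank m ≤ min (rank x) (rank y)`, so
`∑ m = ∑ rank m ≤ ∑ min (rank x) (rank y)`, which is the claimed inequality.
-/

/-- The nonincreasing rearrangement of a sequence: `rankSeq x n` is the
`(n+1)`-st largest value, namely the least `r` such that all but some `n`
indices have `x i ≤ r`. -/
noncomputable def rankSeq (x : ℕ → ℝ) (n : ℕ) : ℝ :=
  sInf {r : ℝ | ∃ A : Finset ℕ, A.card = n ∧ ∀ i ∉ A, x i ≤ r}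

open MeasureTheory Set
open scoped ENNReal

lemma encard_setOf_coe_lt (E : ℕ∞) : {n : ℕ | (n : ℕ∞) < E}.encard = E := by
  induction E using ENat.recTopCoe with
  | top => simp [encard_univ]
  | coe k => simpa [Iio] using encard_coe_eq_coe_finsetCard (Finset.range k)

theorem tsum_ofReal_eq_of_encard_eq {α β : Type*} [MeasurableSpace α] [DiscreteMeasurableSpace α]
    [MeasurableSpace β] [DiscreteMeasurableSpace β] {f : α → ℝ} {g : β → ℝ}
    (hf : ∀ a, 0 ≤ f a) (hg : ∀ b, 0 ≤ g b)
    (h : ∀ t > 0, {a | t < f a}.encard = {b | t < g b}.encard) :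
    ∑' a, ENNReal.ofReal (f a) = ∑' b, ENNReal.ofReal (g b) := by
  rw [← lintegral_count, ← lintegral_count,
    lintegral_eq_lintegral_meas_lt _ (.of_forall hf) .of_discrete,
    lintegral_eq_lintegral_meas_lt _ (.of_forall hg) .of_discrete]
  refine setLIntegral_congr_fun measurableSet_Ioi fun t ht => ?_
  rw [Measure.count_apply (.of_discrete), Measure.count_apply (.of_discrete), h t ht]

theorem hasSum_abs_sub {α : Type*} {f g : α → ℝ} {a b c : ℝ} (hf : HasSum f a) (hg : HasSum g b)
    (hfg : HasSum (fun i => min (f i) (g i)) c) :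
    HasSum (fun i => |f i - g i|) (a + b - 2 * c) := by
  refine ((hf.add hg).sub (hfg.mul_left 2)).congr_fun fun i => ?_
  rw [← max_sub_min_eq_abs']
  linarith [max_add_min (f i) (g i)]

section rankSeq

variable {x : ℕ → ℝ} {n : ℕ}

theorem rankSeq_eq_sInf_encard (x : ℕ → ℝ) (n : ℕ) :
    rankSeq x n = sInf {r : ℝ | {i | r < x i}.encard ≤ n} := by
  refine congrArg sInf (ext fun r => ⟨?_, fun hr => ?_⟩)
  · rintro ⟨A, rfl, hA⟩
    rw [← encard_coe_eq_coe_finsetCard]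
    exact encard_le_encard fun i hi => by_contra fun hiA => (hA i hiA).not_gt hi
  · have hfin := finite_of_encard_le_coe hr
    obtain ⟨A, hsub, hcard⟩ := Infinite.exists_superset_card_eq hfin.toFinset n
      (by rwa [← ENat.natCast_le_natCast, ← hfin.encard_eq_coe_toFinset_card])
    exact ⟨A, hcard, fun i hiA => not_lt.1 fun hi => hiA (hsub (hfin.mem_toFinset.2 hi))⟩

theorem nonempty_setOf_encard_le (hu : BddAbove (range x)) :
    {r : ℝ | {i | r < x i}.encard ≤ n}.Nonempty := by
  obtain ⟨M, hM⟩ := hu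
  have : {i | M < x i} = ∅ :=
    eq_empty_of_forall_notMem fun i hi => (hM (mem_range_self i)).not_gt hi
  exact ⟨M, by simp [this]⟩

theorem bddBelow_setOf_encard_le (hl : BddBelow (range x)) :
    BddBelow {r : ℝ | {i | r < x i}.encard ≤ n} := by
  obtain ⟨c, hc⟩ := hl
  refine ⟨c, fun s hs => not_lt.1 fun hsc => ?_⟩
  have : {i | s < x i} = univ := eq_univ_of_forall fun i => hsc.trans_le (hc (mem_range_self i))
  simp [this, encard_univ] at hs

theorem rankSeq_le_iff (hl : BddBelow (range x)) (hu : BddAbove (range x)) {r : ℝ} :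
    rankSeq x n ≤ r ↔ {i | r < x i}.encard ≤ n := by
  rw [rankSeq_eq_sInf_encard]
  refine ⟨fun hr => ?_, fun hr => csInf_le (bddBelow_setOf_encard_le hl) hr⟩
  by_contra! hlt
  obtain ⟨F, hF, hFcard⟩ := exists_subset_encard_eq (Order.add_one_le_of_lt hlt)
  have hFne : F.Nonempty := by
    rw [← encard_pos, hFcard]; simp
  -- the least of these `n + 1` values above `r` bounds the set from below
  obtain ⟨j, hjF, hjmin⟩ := exists_min_image F x (finite_of_encard_eq_coe hFcard) hFne
  refine (hF hjF).not_ge ((le_csInf (nonempty_setOf_encard_le hu) fun s hs =>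
    not_lt.1 fun hsj => ?_).trans hr)
  have hsub : F ⊆ {i | s < x i} := fun i hi => hsj.trans_le (hjmin i hi)
  have := (encard_le_encard hsub).trans hs
  rw [hFcard] at this
  exact absurd (by exact_mod_cast this : n + 1 ≤ n) (Nat.not_succ_le_self n)

theorem lt_rankSeq_iff (hl : BddBelow (range x)) (hu : BddAbove (range x)) {t : ℝ} :
    t < rankSeq x n ↔ (n : ℕ∞) < {i | t < x i}.encard := by
  simpa only [not_le] using (rankSeq_le_iff hl hu).not

theorem encard_setOf_lt_rankSeq (hl : BddBelow (range x)) (hu : BddAbove (range x)) (t : ℝ) :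
    {n | t < rankSeq x n}.encard = {i | t < x i}.encard := by
  simp only [lt_rankSeq_iff hl hu, encard_setOf_coe_lt]

theorem le_rankSeq {c : ℝ} (hc : ∀ i, c ≤ x i) (hu : BddAbove (range x)) (n : ℕ) :
    c ≤ rankSeq x n := by
  refine le_of_forall_lt fun t ht => ?_
  have : {i | t < x i} = univ := eq_univ_of_forall fun i => ht.trans_le (hc i)
  simp [lt_rankSeq_iff ⟨c, forall_mem_range.2 hc⟩ hu, this, encard_univ]

theorem rankSeq_mono {z : ℕ → ℝ} (hl : BddBelow (range z)) (hu : BddAbove (range x))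
    (h : ∀ i, z i ≤ x i) (n : ℕ) : rankSeq z n ≤ rankSeq x n := by
  have hzu : BddAbove (range z) := BddAbove.range_mono x h hu
  have hxl : BddBelow (range x) := BddBelow.range_mono z h hl
  rw [rankSeq_le_iff hl hzu]
  exact (encard_le_encard fun i hi => hi.trans_le (h i)).trans
    ((rankSeq_le_iff hxl hu).1 le_rfl)

theorem tsum_ofReal_rankSeq (h0 : ∀ i, 0 ≤ x i) (hu : BddAbove (range x)) :
    ∑' n, ENNReal.ofReal (rankSeq x n) = ∑' i, ENNReal.ofReal (x i) :=
  tsum_ofReal_eq_of_encard_eq (le_rankSeq h0 hu) h0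
    fun t _ => encard_setOf_lt_rankSeq ⟨0, forall_mem_range.2 h0⟩ hu t

theorem hasSum_rankSeq (h0 : ∀ i, 0 ≤ x i) {a : ℝ} (hs : HasSum x a) :
    HasSum (rankSeq x) a := by
  have hu : BddAbove (range x) := hs.summable.tendsto_cofinite_zero.bddAbove_range_of_cofinite
  have hr0 := le_rankSeq h0 hu
  have hfin : ∑' n, ENNReal.ofReal (rankSeq x n) ≠ ∞ := by
    rw [tsum_ofReal_rankSeq h0 hu]; exact hs.summable.tsum_ofReal_ne_top
  have hsum : Summable (rankSeq x) := by
    simpa only [ENNReal.toReal_ofReal (hr0 _)] using ENNReal.summable_toReal hfin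
  convert hsum.hasSum
  rw [← ENNReal.ofReal_eq_ofReal_iff (hasSum_le h0 hasSum_zero hs) (tsum_nonneg hr0),
    ENNReal.ofReal_tsum_of_nonneg hr0 hsum, tsum_ofReal_rankSeq h0 hu, ← hs.tsum_eq,
    ENNReal.ofReal_tsum_of_nonneg h0 hs.summable]

theorem tsum_abs_sub_rankSeq_le {y : ℕ → ℝ} (hx0 : ∀ i, 0 ≤ x i) (hx : Summable x)
    (hy0 : ∀ i, 0 ≤ y i) (hy : Summable y) :
    ∑' n, |rankSeq x n - rankSeq y n| ≤ ∑' i, |x i - y i| := by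
  set m : ℕ → ℝ := fun i => min (x i) (y i)
  have hm0 : ∀ i, 0 ≤ m i := fun i => le_min (hx0 i) (hy0 i)
  obtain ⟨c, hm⟩ : Summable m := hx.of_nonneg_of_le hm0 fun i => min_le_left _ _
  have hxu := hx.tendsto_cofinite_zero.bddAbove_range_of_cofinite
  have hyu := hy.tendsto_cofinite_zero.bddAbove_range_of_cofinite
  have hml : BddBelow (range m) := ⟨0, forall_mem_range.2 hm0⟩
  have hrx := hasSum_rankSeq hx0 hx.hasSum
  have hry := hasSum_rankSeq hy0 hy.hasSum
  obtain ⟨c', hrxy⟩ : Summable fun n => min (rankSeq x n) (rankSeq y n) :=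
    hrx.summable.of_nonneg_of_le (fun n => le_min (le_rankSeq hx0 hxu n) (le_rankSeq hy0 hyu n))
      fun n => min_le_left _ _
  have hc : c ≤ c' := hasSum_le (fun n => le_min
    (rankSeq_mono hml hxu (fun i => min_le_left _ _) n)
    (rankSeq_mono hml hyu (fun i => min_le_right _ _) n)) (hasSum_rankSeq hm0 hm) hrxy
  rw [(hasSum_abs_sub hrx hry hrxy).tsum_eq, (hasSum_abs_sub hx.hasSum hy.hasSum hm).tsum_eq]
  linarith

end rankSeq

theorem stmt5_general (x y : ℕ → ℝ)
    (hx0 : ∀ i, 0 ≤ x i) (hxs : HasSum x 1)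
    (hy0 : ∀ i, 0 ≤ y i) (hys : HasSum y 1) :
    ∑' i, |rankSeq x i - rankSeq y i| ≤ ∑' i, |x i - y i| :=
  tsum_abs_sub_rankSeq_le hx0 hxs.summable hy0 hys.summable

/-- The sorting map `rank : Δ → Δ` is a non-strict contraction in the `ℓ¹`
metric: for `x, y` in the infinite simplex,
`‖rank x − rank y‖₁ ≤ ‖x − y‖₁`. -/
theorem stmt5 (x y : ℕ → ℝ)
    (hx0 : ∀ i, 0 ≤ x i) (hx1 : ∀ i, x i ≤ 1) (hxs : HasSum x 1)
    (hy0 : ∀ i, 0 ≤ y i) (hy1 : ∀ i, y i ≤ 1) (hys : HasSum y 1) :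
    ∑' i, |rankSeq x i - rankSeq y i| ≤ ∑' i, |x i - y i| :=
  stmt5_general x y hx0 hxs hy0 hys
end

section
/- The sorting map rank is continuous on the simplex Δ = {(x_1,x_2,…) ∈ [0,1]^∞ : Σ x_i = 1} with the metric d(x,y) = Σ_i 2^{−i}|x_i − y_i|. -/
/-- The infinite simplex `Δ`. -/
def simplexΔ : Set (ℕ → ℝ) :=
  {x | (∀ i, 0 ≤ x i) ∧ (∀ i, x i ≤ 1) ∧ HasSum x 1}

/-- The metric `d(x,y) = ∑ 2^{-i} |x_i - y_i|` on `Δ`. -/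
noncomputable def dMetric (x y : ℕ → ℝ) : ℝ :=
  ∑' i : ℕ, (1 / 2 : ℝ) ^ i * |x i - y i|

open Set Finset Bornology

lemma rankSeq_le_rankSeq_add {x y : ℕ → ℝ} (hx : BddAbove (range x)) (hy : BddBelow (range y))
    {c : ℝ} (h : ∀ i, y i ≤ x i + c) (n : ℕ) : rankSeq y n ≤ rankSeq x n + c := by
  obtain ⟨M, hM⟩ := hx
  obtain ⟨m, hm⟩ := hy
  have hbdd : BddBelow {r : ℝ | ∃ A : Finset ℕ, A.card = n ∧ ∀ i ∉ A, y i ≤ r} := by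
    refine ⟨m, fun r ⟨A, _, hA⟩ => ?_⟩
    obtain ⟨i, hi⟩ := Infinite.exists_notMem_finset A
    exact (hm ⟨i, rfl⟩).trans (hA i hi)
  have : rankSeq y n - c ≤ rankSeq x n := by
    refine le_csInf ⟨M, range n, card_range n, fun i _ => hM ⟨i, rfl⟩⟩ ?_
    rintro r ⟨A, hAcard, hA⟩
    have : rankSeq y n ≤ r + c :=
      csInf_le hbdd ⟨A, hAcard, fun i hi => (h i).trans (by linarith [hA i hi])⟩
    linarith
  linarith

lemma abs_rankSeq_sub_le {x y : ℕ → ℝ} (hx : IsBounded (range x)) (hy : IsBounded (range y))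
    {c : ℝ} (h : ∀ i, |x i - y i| ≤ c) (n : ℕ) : |rankSeq x n - rankSeq y n| ≤ c := by
  have hxy := rankSeq_le_rankSeq_add hy.bddAbove hx.bddBelow
    (fun i => by linarith [(abs_sub_le_iff.mp (h i)).1]) n
  have hyx := rankSeq_le_rankSeq_add hx.bddAbove hy.bddBelow
    (fun i => by linarith [(abs_sub_le_iff.mp (h i)).2]) n
  exact abs_sub_le_iff.mpr ⟨by linarith, by linarith⟩

lemma summable_dMetric_of_abs_sub_le {x y : ℕ → ℝ} {c : ℝ} (h : ∀ i, |x i - y i| ≤ c) :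
    Summable fun i => (1 / 2 : ℝ) ^ i * |x i - y i| :=
  (summable_geometric_two.mul_right c).of_nonneg_of_le (fun i => by positivity)
    fun i => mul_le_mul_of_nonneg_left (h i) (by positivity)

lemma dMetric_le_of_abs_sub_le {x y : ℕ → ℝ} {c : ℝ} (h : ∀ i, |x i - y i| ≤ c) :
    dMetric x y ≤ 2 * c :=
  calc dMetric x y ≤ ∑' i : ℕ, (1 / 2 : ℝ) ^ i * c :=
        (summable_dMetric_of_abs_sub_le h).tsum_le_tsum
          (fun i => mul_le_mul_of_nonneg_left (h i) (by positivity))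
          (summable_geometric_two.mul_right c)
    _ = 2 * c := by rw [tsum_mul_right, tsum_geometric_two]

lemma abs_sub_le_two_pow_mul_dMetric {x y : ℕ → ℝ}
    (hs : Summable fun i => (1 / 2 : ℝ) ^ i * |x i - y i|) (i : ℕ) :
    |x i - y i| ≤ 2 ^ i * dMetric x y :=
  calc |x i - y i| = 2 ^ i * ((1 / 2 : ℝ) ^ i * |x i - y i|) := by
        rw [← mul_assoc, ← mul_pow]; norm_num
    _ ≤ 2 ^ i * dMetric x y :=
        mul_le_mul_of_nonneg_left (hs.le_tsum i fun j _ => by positivity) (by positivity)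

lemma le_sub_sum_of_hasSum {ι : Type*} {f : ι → ℝ} {a : ℝ} (hf0 : ∀ i, 0 ≤ f i)
    (hf : HasSum f a) {s : Finset ι} {i : ι} (hi : i ∉ s) : f i ≤ a - ∑ j ∈ s, f j := by
  classical
  have := sum_le_hasSum (insert i s) (fun j _ => hf0 j) hf
  rw [sum_insert hi] at this
  linarith

lemma abs_sub_le_tail_add {x y : ℕ → ℝ} {a : ℝ} (hx0 : ∀ i, 0 ≤ x i) (hy0 : ∀ i, 0 ≤ y i)
    (hx : HasSum x a) (hy : HasSum y a) {N : ℕ} {K : ℝ} (hK : ∀ i < N, |x i - y i| ≤ K)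
    {i : ℕ} (hi : N ≤ i) : |x i - y i| ≤ (a - ∑ j ∈ range N, x j) + N * K := by
  have hhead : ∑ j ∈ range N, |x j - y j| ≤ N * K :=
    calc ∑ j ∈ range N, |x j - y j| ≤ ∑ _j ∈ range N, K :=
          sum_le_sum fun j hj => hK j (mem_range.mp hj)
      _ = N * K := by simp
  have hdiff : ∑ j ∈ range N, x j - ∑ j ∈ range N, y j ≤ ∑ j ∈ range N, |x j - y j| := by
    rw [← sum_sub_distrib]
    exact sum_le_sum fun j _ => le_abs_self _
  have hnonneg : 0 ≤ ∑ j ∈ range N, |x j - y j| := sum_nonneg fun j _ => abs_nonneg _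
  have hi' : i ∉ range N := by simpa using hi
  have hxi := le_sub_sum_of_hasSum hx0 hx hi'
  have hyi := le_sub_sum_of_hasSum hy0 hy hi'
  exact abs_sub_le_iff.mpr ⟨by linarith [hy0 i], by linarith [hx0 i]⟩

lemma isBounded_range_of_mem_simplexΔ {x : ℕ → ℝ} (hx : x ∈ simplexΔ) : IsBounded (range x) :=
  (Metric.isBounded_Icc (0 : ℝ) 1).subset <| by
    rintro _ ⟨i, rfl⟩
    exact ⟨hx.1 i, hx.2.1 i⟩

lemma exists_forall_abs_sub_le_of_dMetric_lt {x : ℕ → ℝ} (hx : x ∈ simplexΔ) {ε : ℝ}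
    (hε : 0 < ε) : ∃ δ > 0, ∀ y ∈ simplexΔ, dMetric x y < δ → ∀ i, |x i - y i| ≤ ε := by
  obtain ⟨hx0, hx1, hxs⟩ := hx
  obtain ⟨N, hN⟩ : ∃ N, 1 - ε / 2 < ∑ j ∈ range N, x j :=
    (hxs.tendsto_sum_nat.eventually_const_lt (by linarith)).exists
  refine ⟨ε / (2 * (N + 1) * 2 ^ N), by positivity, ?_⟩
  rintro y ⟨hy0, hy1, hys⟩ hd i
  have hs : Summable fun i => (1 / 2 : ℝ) ^ i * |x i - y i| :=
    summable_dMetric_of_abs_sub_le (c := 1) fun i =>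
      abs_sub_le_iff.mpr ⟨by linarith [hx1 i, hy0 i], by linarith [hy1 i, hx0 i]⟩
  have hd0 : 0 ≤ dMetric x y := tsum_nonneg fun i => by positivity
  set K := 2 ^ N * dMetric x y
  have hK0 : 0 ≤ K := by positivity
  have hKε : (N + 1) * K < ε / 2 :=
    calc (N + 1) * K < (N + 1) * (2 ^ N * (ε / (2 * (N + 1) * 2 ^ N))) :=
          mul_lt_mul_of_pos_left (mul_lt_mul_of_pos_left hd (by positivity)) (by positivity)
      _ = ε / 2 := by field_simp
  have hhead : ∀ i < N, |x i - y i| ≤ K := fun i hi =>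
    (abs_sub_le_two_pow_mul_dMetric hs i).trans <|
      mul_le_mul_of_nonneg_right (pow_le_pow_right₀ (by norm_num) hi.le) hd0
  rcases lt_or_ge i N with hi | hi
  · nlinarith [hhead i hi]
  · nlinarith [abs_sub_le_tail_add hx0 hy0 hxs hys hhead hi]

/-- The sorting map `rank` is continuous on the simplex `Δ` with respect to
the metric `d(x,y) = ∑ 2^{-i}|x_i - y_i|`. -/
theorem stmt6 :
    ∀ x ∈ simplexΔ, ∀ ε > (0 : ℝ), ∃ δ > (0 : ℝ), ∀ y ∈ simplexΔ,
      dMetric x y < δ → dMetric (rankSeq x) (rankSeq y) < ε := by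
  intro x hx ε hε
  obtain ⟨δ, hδ, hclose⟩ := exists_forall_abs_sub_le_of_dMetric_lt hx (by positivity : 0 < ε / 4)
  refine ⟨δ, hδ, fun y hy hd => ?_⟩
  have hrank : ∀ n, |rankSeq x n - rankSeq y n| ≤ ε / 4 :=
    abs_rankSeq_sub_le (isBounded_range_of_mem_simplexΔ hx) (isBounded_range_of_mem_simplexΔ hy)
      (hclose y hy hd)
  linarith [dMetric_le_of_abs_sub_le hrank]
end

section
/- Let S be a set of relations among coin-toss bits C_0, C_1, …, each relation of the form C_i = C_j or C_i ≠ C_j with i < j, with at most one relation per pair (i,j). If the graph on the index set with an edge {i,j} for each relation in S is acyclic, then for independent fair coin bits the probability that all relations in S hold equals 2^{−|S|}. -/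
/-!
Induct on the number of relations. In a forest every edge `{i, j}` is a bridge, so after removing it
`i` and `j` lie in different components of the remaining graph. Negating all bits on the component
of `j` preserves every remaining relation and toggles the relation between `C_i` and `C_j`; this
involution shows that exactly half of the assignments satisfying the remaining relations also
satisfy the removed one.
-/

open SimpleGraph Finset

variable {V : Type*}

lemma SimpleGraph.fromRel_mono {r s : V → V → Prop} (h : ∀ v w, r v w → s v w) :
    fromRel r ≤ fromRel s := fun v w hvw => by
  rw [fromRel_adj] at hvw ⊢
  exact ⟨hvw.1, hvw.2.imp (h v w) (h w v)⟩

def relationGraph (S : Finset (V × V)) : SimpleGraph V :=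
  fromRel fun i j => (i, j) ∈ S

def assignmentsSatisfying [Fintype V] [DecidableEq V] (S : Finset (V × V)) (b : V × V → Bool) :
    Finset (V → Bool) :=
  univ.filter fun C => ∀ p ∈ S, (C p.1 = C p.2 ↔ b p = true)

section flipComponent

variable (G : SimpleGraph V) (v : V)

open Classical in
noncomputable def flipComponent (C : V → Bool) : V → Bool :=
  fun w => if G.Reachable v w then !C w else C w

variable {G v}

lemma flipComponent_involutive : Function.Involutive (flipComponent G v) := fun C => by
  funext w
  by_cases h : G.Reachable v w <;> simp [flipComponent, h]

lemma flipComponent_of_reachable {w : V} (h : G.Reachable v w) (C : V → Bool) :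
    flipComponent G v C w = !C w := by
  simp [flipComponent, h]

lemma flipComponent_of_not_reachable {w : V} (h : ¬ G.Reachable v w) (C : V → Bool) :
    flipComponent G v C w = C w := by
  simp [flipComponent, h]

lemma flipComponent_eq_iff_of_adj {x y : V} (h : G.Adj x y) (C : V → Bool) :
    flipComponent G v C x = flipComponent G v C y ↔ C x = C y := by
  have hreach : G.Reachable v x ↔ G.Reachable v y :=
    ⟨fun hx => hx.trans h.reachable, fun hy => hy.trans h.symm.reachable⟩
  by_cases hx : G.Reachable v x
  · rw [flipComponent_of_reachable hx, flipComponent_of_reachable (hreach.mp hx), Bool.not_inj_iff]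
  · rw [flipComponent_of_not_reachable hx,
      flipComponent_of_not_reachable (mt hreach.mpr hx)]

end flipComponent

lemma flipComponent_relationGraph_eq_iff {S : Finset (V × V)} {q : V × V} (hq : q ∈ S) (v : V)
    (C : V → Bool) :
    flipComponent (relationGraph S) v C q.1 = flipComponent (relationGraph S) v C q.2 ↔
      C q.1 = C q.2 := by
  by_cases hloop : q.1 = q.2
  · simp [hloop]
  · exact flipComponent_eq_iff_of_adj ((fromRel_adj _ _ _).mpr ⟨hloop, .inl hq⟩) C

theorem card_assignmentsSatisfying_eq_two_mul_card_insert [Fintype V] [DecidableEq V]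
    {T : Finset (V × V)} {p : V × V} (b : V × V → Bool)
    (hp : ¬ (relationGraph T).Reachable p.1 p.2) :
    #(assignmentsSatisfying T b) = 2 * #(assignmentsSatisfying (insert p T) b) := by
  have hflip_p : ∀ C, (flipComponent (relationGraph T) p.2 C p.1 =
      flipComponent (relationGraph T) p.2 C p.2 ↔ b p = true) ↔
      ¬ (C p.1 = C p.2 ↔ b p = true) := by
    intro C
    rw [flipComponent_of_not_reachable (fun h => hp h.symm),
      flipComponent_of_reachable Reachable.rfl]
    cases C p.1 <;> cases C p.2 <;> cases b p <;> decide
  have hsat : (assignmentsSatisfying T b).filter (fun C => C p.1 = C p.2 ↔ b p = true) =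
      assignmentsSatisfying (insert p T) b := by
    ext C
    simp [assignmentsSatisfying, and_comm]
  have hviolate : #((assignmentsSatisfying T b).filter
      (fun C => ¬ (C p.1 = C p.2 ↔ b p = true))) = #(assignmentsSatisfying (insert p T) b) := by
    rw [← hsat]
    refine card_equiv ((flipComponent_involutive (G := relationGraph T) (v := p.2)).toPerm _)
      fun C => ?_
    have hflip_T : (∀ q ∈ T, flipComponent (relationGraph T) p.2 C q.1 =
        flipComponent (relationGraph T) p.2 C q.2 ↔ b q = true) ↔
        ∀ q ∈ T, (C q.1 = C q.2 ↔ b q = true) :=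
      forall₂_congr fun q hq => by rw [flipComponent_relationGraph_eq_iff hq]
    simp only [assignmentsSatisfying, mem_filter, mem_univ, true_and,
      Function.Involutive.coe_toPerm, hflip_T, hflip_p]
  rw [← card_filter_add_card_filter_not (fun C => C p.1 = C p.2 ↔ b p = true), hsat, hviolate,
    two_mul]

lemma not_reachable_relationGraph_of_isAcyclic_insert [DecidableEq V] {T : Finset (V × V)}
    {p : V × V} (hpT : p ∉ T) (hswap : p.swap ∉ T) (hne : p.1 ≠ p.2)
    (h : (relationGraph (insert p T)).IsAcyclic) : ¬ (relationGraph T).Reachable p.1 p.2 := by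
  have hadj : (relationGraph (insert p T)).Adj p.1 p.2 := by
    simp [relationGraph, fromRel_adj, hne]
  have hbridge := isAcyclic_iff_forall_adj_isBridge.mp h hadj
  rw [isBridge_iff] at hbridge
  refine fun hr => hbridge (hr.mono fun v w hvw => ?_)
  obtain ⟨x, y⟩ := p
  simp only [relationGraph, fromRel_adj, ne_eq, mem_insert, deleteEdges_adj,
    Set.mem_singleton_iff, Sym2.eq, Sym2.rel_iff', not_or] at hvw ⊢
  refine ⟨⟨hvw.1, by tauto⟩, ?_, ?_⟩ <;> intro h <;> simp_all

theorem card_assignmentsSatisfying_mul_two_pow_card [Fintype V] [LinearOrder V]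
    (S : Finset (V × V)) (b : V × V → Bool) (hlt : ∀ p ∈ S, p.1 < p.2)
    (hacyclic : (relationGraph S).IsAcyclic) :
    #(assignmentsSatisfying S b) * 2 ^ #S = 2 ^ Fintype.card V := by
  induction S using Finset.induction_on with
  | empty => simp [assignmentsSatisfying]
  | insert p T hpT ih =>
    have hltT : ∀ q ∈ T, q.1 < q.2 := fun q hq => hlt q (mem_insert_of_mem hq)
    have hltp : p.1 < p.2 := hlt p (mem_insert_self p T)
    have hacyclicT : (relationGraph T).IsAcyclic :=
      hacyclic.anti (fromRel_mono fun _ _ => mem_insert_of_mem)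
    have hswap : p.swap ∉ T := fun h => (hltT _ h).not_gt hltp
    rw [card_insert_of_notMem hpT, pow_succ, ← ih hltT hacyclicT,
      card_assignmentsSatisfying_eq_two_mul_card_insert b
        (not_reachable_relationGraph_of_isAcyclic_insert hpT hswap hltp.ne hacyclic)]
    ring

/-- Let `S` be a set of relations among fair coin bits `C_0, …, C_{M-1}`, each
of the form `C_i = C_j` (when `b (i,j) = true`) or `C_i ≠ C_j` (when
`b (i,j) = false`) with `i < j`, at most one relation per pair. If the graph
with an edge `{i,j}` for each relation in `S` is acyclic, then the probability
that all relations hold is `2^{-|S|}`: the number of bit assignments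
satisfying `S`, times `2^{|S|}`, is `2^M`. -/
theorem stmt8 (M : ℕ) (S : Finset (Fin M × Fin M)) (b : Fin M × Fin M → Bool)
    (hlt : ∀ p ∈ S, p.1 < p.2)
    (hacyclic : (SimpleGraph.fromRel (fun i j : Fin M => (i, j) ∈ S)).IsAcyclic) :
    ((Finset.univ : Finset (Fin M → Bool)).filter
        (fun C => ∀ p ∈ S, ((C p.1 = C p.2) ↔ b p = true))).card * 2 ^ S.card
      = 2 ^ M := by
  have h := card_assignmentsSatisfying_mul_two_pow_card S b hlt hacyclic
  rw [Fintype.card_fin] at h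
  exact h
end

section
/- Fix integers i < j and m ≥ 1, and consider the graph on the integers whose edges are the m pairs {i, j}, {i+1, j+1}, …, {i+m−1, j+m−1}. This graph is acyclic; consequently, for independent fair coin bits, the probability that C_{i+ℓ} = C_{j+ℓ} for all 0 ≤ ℓ < m equals 2^{−m}. -/
/-!
Every edge `{i+ℓ, j+ℓ}` joins two numbers at distance `d = |j - i|`, so the graph is a subgraph of
the graph `a ∼ a + d` on `ℕ`, in which every edge `{u, u+d}` is a bridge: it is the only edge
leaving the set of `w` that are `≤ u` or not congruent to `u` mod `d`.

For the count, the `ℓ`-th constraint `C (i+ℓ) = C (j+ℓ)` involves the coordinate `j+ℓ`, which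
occurs in no earlier constraint. Flipping that coordinate exchanges the assignments satisfying the
`ℓ`-th constraint with those violating it and preserves the earlier ones, so each constraint halves
the number of assignments.
-/

open Finset

namespace SimpleGraph

variable {V : Type*} {G : SimpleGraph V}

lemma isBridge_of_boundary {u v : V} (S : Set V) (hu : u ∈ S) (hv : v ∉ S)
    (hcut : ∀ a b, G.Adj a b → a ∈ S → b ∉ S → a = u ∧ b = v) : G.IsBridge s(u, v) := by
  rintro ⟨p⟩
  obtain ⟨d, -, hdS, hdS'⟩ := p.exists_boundary_dart S hu hv
  have hd := d.adj
  rw [deleteEdges_adj] at hd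
  obtain ⟨h₁, h₂⟩ := hcut _ _ hd.1 hdS hdS'
  exact hd.2 (by rw [h₁, h₂]; rfl)

end SimpleGraph

open SimpleGraph

lemma isAcyclic_fromRel_eq_add (d : ℕ) : (fromRel fun a b : ℕ => b = a + d).IsAcyclic := by
  have isBridge_shift : ∀ u, u ≠ u + d → (fromRel fun a b : ℕ => b = a + d).IsBridge s(u, u + d) := by
    intro u hd
    refine isBridge_of_boundary {w | w % d = u % d → w ≤ u} (fun _ => le_rfl)
      (fun h => by have := h (Nat.add_mod_right u d); omega) ?_
    rintro a b ⟨-, rfl | rfl⟩ ha hb <;>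
      simp only [Set.mem_ofPred_eq, Classical.not_imp, Nat.add_mod_right] at ha hb
    · have hau : a = u :=
        Nat.ModEq.eq_of_abs_lt hb.1 (abs_sub_lt_iff.mpr ⟨by omega, by omega⟩)
      exact ⟨hau, by rw [hau]⟩
    · have := ha hb.1
      omega
  rw [isAcyclic_iff_forall_adj_isBridge]
  rintro u v ⟨huv, rfl | rfl⟩
  · exact isBridge_shift u huv
  · rw [Sym2.eq_swap]
    exact isBridge_shift v huv.symm

lemma isAcyclic_fromRel_translate (i j m : ℕ) :
    (fromRel fun a b : ℕ => ∃ ℓ < m, a = i + ℓ ∧ b = j + ℓ).IsAcyclic := by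
  refine (isAcyclic_fromRel_eq_add (Nat.dist i j)).anti ?_
  rintro a b ⟨hne, h⟩
  refine ⟨hne, ?_⟩
  unfold Nat.dist
  rcases h with ⟨ℓ, -, rfl, rfl⟩ | ⟨ℓ, -, rfl, rfl⟩ <;> omega

section Counting

variable {ι : Type*} [Fintype ι] [DecidableEq ι]

lemma two_mul_card_filter_and_apply_eq (P : (ι → Bool) → Prop) [DecidablePred P] {x y : ι}
    (hxy : x ≠ y) (hP : ∀ C c, P (Function.update C y c) ↔ P C) :
    2 * #{C | P C ∧ C x = C y} = #{C | P C} := by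
  set flip : (ι → Bool) → (ι → Bool) := fun C => Function.update C y (!C y)
  have flip_flip : ∀ C, flip (flip C) = C := fun C => by simp [flip]
  have card_eq : #{C | P C ∧ C x = C y} = #{C | P C ∧ C x ≠ C y} := by
    refine card_nbij' flip flip (fun C hC => ?_) (fun C hC => ?_) (fun C _ => flip_flip C)
      (fun C _ => flip_flip C) <;>
      simpa [flip, hP, Function.update_of_ne hxy, Bool.eq_not] using hC
  rw [two_mul]
  nth_rw 2 [card_eq]
  rw [← filter_filter, ← filter_filter]
  exact card_filter_add_card_filter_not _

lemma card_filter_forall_apply_eq_mul_two_pow (a b : ℕ → ι) (m : ℕ)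
    (hab : ∀ n < m, a n ≠ b n) (hfresh : ∀ n < m, ∀ k < n, b n ≠ a k ∧ b n ≠ b k) :
    #{C : ι → Bool | ∀ ℓ < m, C (a ℓ) = C (b ℓ)} * 2 ^ m = 2 ^ Fintype.card ι := by
  induction m with
  | zero => simp
  | succ m ih =>
    have hP : ∀ (C : ι → Bool) c,
        (∀ ℓ < m, Function.update C (b m) c (a ℓ) = Function.update C (b m) c (b ℓ)) ↔
          ∀ ℓ < m, C (a ℓ) = C (b ℓ) := fun C c => forall₂_congr fun ℓ hℓ => by
      have := hfresh m (by omega) ℓ hℓ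
      rw [Function.update_of_ne this.1.symm, Function.update_of_ne this.2.symm]
    have halve := two_mul_card_filter_and_apply_eq (fun C => ∀ ℓ < m, C (a ℓ) = C (b ℓ))
      (hab m (by omega)) hP
    simp only [Nat.forall_lt_succ_right]
    rw [← ih (fun n hn => hab n (by omega)) (fun n hn => hfresh n (by omega)), ← halve]
    ring

end Counting

theorem stmt9_general (i j m M : ℕ) (hij : i < j) (hM : j + m ≤ M) :
    (SimpleGraph.fromRel (fun a b : ℕ => ∃ ℓ < m, a = i + ℓ ∧ b = j + ℓ)).IsAcyclic
    ∧
    ((Finset.univ : Finset (Fin M → Bool)).filter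
        (fun C =>
          let D : ℕ → Bool := fun a => if h : a < M then C ⟨a, h⟩ else false
          ∀ ℓ ∈ Finset.range m, D (i + ℓ) = D (j + ℓ))).card * 2 ^ m
      = 2 ^ M := by
  refine ⟨isAcyclic_fromRel_translate i j m, ?_⟩
  have hM0 : 0 < M := by omega
  set a : ℕ → Fin M := fun ℓ => ⟨(i + ℓ) % M, Nat.mod_lt _ hM0⟩
  set b : ℕ → Fin M := fun ℓ => ⟨(j + ℓ) % M, Nat.mod_lt _ hM0⟩
  have ha : ∀ ℓ (hℓ : ℓ < m), a ℓ = ⟨i + ℓ, by omega⟩ := fun ℓ hℓ =>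
    Fin.ext (Nat.mod_eq_of_lt (by omega))
  have hb : ∀ ℓ (hℓ : ℓ < m), b ℓ = ⟨j + ℓ, by omega⟩ := fun ℓ hℓ =>
    Fin.ext (Nat.mod_eq_of_lt (by omega))
  have count := card_filter_forall_apply_eq_mul_two_pow a b m
    (fun n hn => by
      rw [ha n hn, hb n hn, ne_eq, Fin.mk.injEq]
      omega)
    (fun n hn k hk => by
      rw [ha k (by omega), hb n hn, hb k (by omega), ne_eq, Fin.mk.injEq, ne_eq, Fin.mk.injEq]
      omega)
  rw [Fintype.card_fin] at count
  convert count using 3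
  refine filter_congr fun C _ => ?_
  simp only [mem_range]
  refine forall₂_congr fun ℓ hℓ => ?_
  rw [dif_pos (by omega), dif_pos (by omega), ha ℓ hℓ, hb ℓ hℓ]

/-- Fix `i < j` and `m ≥ 1`. The graph on the integers with the `m` edges
`{i+ℓ, j+ℓ}`, `0 ≤ ℓ < m`, is acyclic; consequently, for `M ≥ j + m`
independent fair coin bits, the probability that `C_{i+ℓ} = C_{j+ℓ}` for all
`0 ≤ ℓ < m` equals `2^{-m}`. -/
theorem stmt9 (i j m M : ℕ) (hij : i < j) (hm : 1 ≤ m) (hM : j + m ≤ M) :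
    (SimpleGraph.fromRel (fun a b : ℕ => ∃ ℓ < m, a = i + ℓ ∧ b = j + ℓ)).IsAcyclic
    ∧
    ((Finset.univ : Finset (Fin M → Bool)).filter
        (fun C =>
          let D : ℕ → Bool := fun a => if h : a < M then C ⟨a, h⟩ else false
          ∀ ℓ ∈ Finset.range m, D (i + ℓ) = D (j + ℓ))).card * 2 ^ m
      = 2 ^ M :=
  stmt9_general i j m M hij hM
end

section
/- Let G be the graph on the integers whose edge set is the union of two families of pairs: {(i_1+ℓ, j_1+ℓ) : 0 ≤ ℓ < m_1} and {(i_2+ℓ, j_2+ℓ) : 0 ≤ ℓ < m_2}, with i_1 < j_1 and i_2 < j_2. Write I_a = {i_a,…,i_a+m_a−1} and J_a = {j_a,…,j_a+m_a−1}. Then G is acyclic if I_1 ∩ I_2 = ∅, or if J_1 ∩ J_2 = ∅, or if (I_1 ∪ I_2) ∩ (J_1 ∪ J_2) = ∅ and j_2 − i_2 ≠ j_1 − i_1. -/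
/-!
Orient every edge towards a "parent" so that a potential `f` increases along it. If each vertex
has at most one neighbour of larger potential, there is no cycle: at a vertex of minimal
potential on a cycle, its two cycle neighbours would both lie above it and hence coincide.

For the two shift families `x ↦ x + δ_a` (`δ_a = j_a - i_a`, on `x ∈ I_a`) such an orientation
exists in each case. If `I₁, I₂` are disjoint, every vertex has at most one upward edge, so
`f = id` works; if `J₁, J₂` are disjoint, the mirror argument works with the reversed order.
In the last case, say `δ₂ < δ₁`: the potential `2x`, raised by `δ₁ + δ₂` on the sources `I₁ ∪ I₂`,
makes the edges of the longer shift `δ₁` point up and those of the shorter shift `δ₂` point down,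
so the parent of `x` is `x + δ₁` on `I₁` and `x - δ₂` elsewhere.
-/

open SimpleGraph

theorem Finset.Ico_disjoint_Ico {α : Type*} [LinearOrder α] [LocallyFiniteOrder α]
    {a₁ a₂ b₁ b₂ : α} :
    Disjoint (Finset.Ico a₁ a₂) (Finset.Ico b₁ b₂) ↔ min a₂ b₂ ≤ max a₁ b₁ := by
  rw [← Finset.disjoint_coe, Finset.coe_Ico, Finset.coe_Ico, Set.Ico_disjoint_Ico]

namespace SimpleGraph

variable {V α : Type*} [LinearOrder α]

theorem isAcyclic_of_unique_upper_neighbor {G : SimpleGraph V} (f : V → α)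
    (hf : ∀ ⦃a b⦄, G.Adj a b → f a ≠ f b)
    (huniq : ∀ ⦃a b c⦄, G.Adj a b → G.Adj a c → f a < f b → f a < f c → b = c) :
    G.IsAcyclic := by
  classical
  intro v c hc
  obtain ⟨u, hu, hmin⟩ := c.support.toFinset.exists_min_image f ⟨v, by simp⟩
  rw [List.mem_toFinset] at hu
  set c' := c.rotate u hu
  have hc' : c'.IsCycle := hc.rotate hu
  have above : ∀ w ∈ c'.support, G.Adj u w → f u < f w := fun w hw hadj =>
    (hmin w (by simpa [c'] using hw)).lt_of_ne (hf hadj)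
  have hsnd := c'.adj_snd hc'.not_nil
  have hpen := (c'.adj_penultimate hc'.not_nil).symm
  exact hc'.snd_ne_penultimate <| huniq hsnd hpen
    (above _ (c'.getVert_mem_support _) hsnd) (above _ (c'.getVert_mem_support _) hpen)

theorem isAcyclic_fromRel_of_parent {r : V → V → Prop} (parent : V → V) (f : V → α)
    (h : ∀ a b, r a b → (b = parent a ∧ f a < f b) ∨ (a = parent b ∧ f b < f a)) :
    (fromRel r).IsAcyclic := by
  have horient : ∀ a b, (fromRel r).Adj a b →
      (b = parent a ∧ f a < f b) ∨ (a = parent b ∧ f b < f a) := by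
    rintro a b ⟨-, hab | hba⟩
    exacts [h a b hab, (h b a hba).symm]
  refine isAcyclic_of_unique_upper_neighbor f (fun a b hab => ?_) (fun a b c hab hac hb hc => ?_)
  · rcases horient a b hab with ⟨-, hlt⟩ | ⟨-, hlt⟩
    exacts [hlt.ne, hlt.ne']
  · have up : ∀ x, (fromRel r).Adj a x → f a < f x → x = parent a := fun x hax hx =>
      ((horient a x hax).resolve_right fun ⟨_, hlt⟩ => hlt.not_gt hx).1
    rw [up b hab hb, up c hac hc]

end SimpleGraph

def twoShiftGraph (i₁ j₁ m₁ i₂ j₂ m₂ : ℕ) : SimpleGraph ℕ :=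
  fromRel fun a b => (∃ ℓ < m₁, a = i₁ + ℓ ∧ b = j₁ + ℓ) ∨ (∃ ℓ < m₂, a = i₂ + ℓ ∧ b = j₂ + ℓ)

section

variable {i₁ j₁ m₁ i₂ j₂ m₂ : ℕ}

theorem twoShiftGraph_comm (i₁ j₁ m₁ i₂ j₂ m₂ : ℕ) :
    twoShiftGraph i₁ j₁ m₁ i₂ j₂ m₂ = twoShiftGraph i₂ j₂ m₂ i₁ j₁ m₁ := by
  simp only [twoShiftGraph, or_comm]

theorem isAcyclic_twoShiftGraph_of_disjoint_sources (h1 : i₁ < j₁) (h2 : i₂ < j₂)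
    (hI : Disjoint (Finset.Ico i₁ (i₁ + m₁)) (Finset.Ico i₂ (i₂ + m₂))) :
    (twoShiftGraph i₁ j₁ m₁ i₂ j₂ m₂).IsAcyclic := by
  rw [Finset.Ico_disjoint_Ico] at hI
  refine isAcyclic_fromRel_of_parent
    (fun x => if i₁ ≤ x ∧ x < i₁ + m₁ then x + (j₁ - i₁) else x + (j₂ - i₂)) id ?_
  rintro a b (⟨ℓ, hℓ, rfl, rfl⟩ | ⟨ℓ, hℓ, rfl, rfl⟩) <;> simp only [id] <;> split_ifs <;> omega

theorem isAcyclic_twoShiftGraph_of_disjoint_targets (h1 : i₁ < j₁) (h2 : i₂ < j₂)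
    (hJ : Disjoint (Finset.Ico j₁ (j₁ + m₁)) (Finset.Ico j₂ (j₂ + m₂))) :
    (twoShiftGraph i₁ j₁ m₁ i₂ j₂ m₂).IsAcyclic := by
  rw [Finset.Ico_disjoint_Ico] at hJ
  refine isAcyclic_fromRel_of_parent
    (fun x => if j₁ ≤ x ∧ x < j₁ + m₁ then x - (j₁ - i₁) else x - (j₂ - i₂)) OrderDual.toDual ?_
  rintro a b (⟨ℓ, hℓ, rfl, rfl⟩ | ⟨ℓ, hℓ, rfl, rfl⟩) <;> simp only [OrderDual.toDual_lt_toDual] <;>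
    split_ifs <;> omega

theorem isAcyclic_twoShiftGraph_of_shift_lt (h1 : i₁ < j₁) (h2 : i₂ < j₂)
    (hIJ : Disjoint (Finset.Ico i₁ (i₁ + m₁) ∪ Finset.Ico i₂ (i₂ + m₂))
      (Finset.Ico j₁ (j₁ + m₁) ∪ Finset.Ico j₂ (j₂ + m₂)))
    (hlt : j₂ - i₂ < j₁ - i₁) :
    (twoShiftGraph i₁ j₁ m₁ i₂ j₂ m₂).IsAcyclic := by
  have target_not_source : ∀ x, (j₁ ≤ x ∧ x < j₁ + m₁) ∨ (j₂ ≤ x ∧ x < j₂ + m₂) →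
      ¬((i₁ ≤ x ∧ x < i₁ + m₁) ∨ (i₂ ≤ x ∧ x < i₂ + m₂)) := fun x hx => by
    simpa using Finset.disjoint_right.1 hIJ (by simpa using hx)
  refine isAcyclic_fromRel_of_parent
    (fun x => if i₁ ≤ x ∧ x < i₁ + m₁ then x + (j₁ - i₁) else x - (j₂ - i₂))
    (fun x => 2 * x + if (i₁ ≤ x ∧ x < i₁ + m₁) ∨ (i₂ ≤ x ∧ x < i₂ + m₂)
      then (j₁ - i₁) + (j₂ - i₂) else 0) ?_
  rintro a b (⟨ℓ, hℓ, rfl, rfl⟩ | ⟨ℓ, hℓ, rfl, rfl⟩)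
  · have := target_not_source (j₁ + ℓ) (by omega)
    split_ifs <;> omega
  · have := target_not_source (j₂ + ℓ) (by omega)
    split_ifs <;> omega

theorem isAcyclic_twoShiftGraph_of_shift_ne (h1 : i₁ < j₁) (h2 : i₂ < j₂)
    (hIJ : Disjoint (Finset.Ico i₁ (i₁ + m₁) ∪ Finset.Ico i₂ (i₂ + m₂))
      (Finset.Ico j₁ (j₁ + m₁) ∪ Finset.Ico j₂ (j₂ + m₂)))
    (hne : j₂ - i₂ ≠ j₁ - i₁) :
    (twoShiftGraph i₁ j₁ m₁ i₂ j₂ m₂).IsAcyclic := by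
  rcases hne.lt_or_gt with hlt | hlt
  · exact isAcyclic_twoShiftGraph_of_shift_lt h1 h2 hIJ hlt
  · rw [twoShiftGraph_comm]
    rw [Finset.union_comm, Finset.union_comm (Finset.Ico j₁ _)] at hIJ
    exact isAcyclic_twoShiftGraph_of_shift_lt h2 h1 hIJ hlt

end

/-- Let `G` be the graph on the integers whose edges are the union of the two
families `{i₁+ℓ, j₁+ℓ}` (`0 ≤ ℓ < m₁`) and `{i₂+ℓ, j₂+ℓ}` (`0 ≤ ℓ < m₂`),
with `i₁ < j₁` and `i₂ < j₂`.  Write `I_a = [i_a, i_a+m_a)`,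
`J_a = [j_a, j_a+m_a)`.  Then `G` is acyclic if `I₁ ∩ I₂ = ∅`, or
`J₁ ∩ J₂ = ∅`, or (`(I₁ ∪ I₂) ∩ (J₁ ∪ J₂) = ∅` and `j₂ − i₂ ≠ j₁ − i₁`). -/
theorem stmt10 (i₁ j₁ m₁ i₂ j₂ m₂ : ℕ) (h1 : i₁ < j₁) (h2 : i₂ < j₂)
    (hcase :
      Disjoint (Finset.Ico i₁ (i₁ + m₁)) (Finset.Ico i₂ (i₂ + m₂)) ∨
      Disjoint (Finset.Ico j₁ (j₁ + m₁)) (Finset.Ico j₂ (j₂ + m₂)) ∨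
      (Disjoint (Finset.Ico i₁ (i₁ + m₁) ∪ Finset.Ico i₂ (i₂ + m₂))
          (Finset.Ico j₁ (j₁ + m₁) ∪ Finset.Ico j₂ (j₂ + m₂)) ∧
        j₂ - i₂ ≠ j₁ - i₁)) :
    (SimpleGraph.fromRel (fun a b : ℕ =>
        (∃ ℓ < m₁, a = i₁ + ℓ ∧ b = j₁ + ℓ) ∨
        (∃ ℓ < m₂, a = i₂ + ℓ ∧ b = j₂ + ℓ))).IsAcyclic := by
  rcases hcase with hI | hJ | ⟨hIJ, hne⟩
  · exact isAcyclic_twoShiftGraph_of_disjoint_sources h1 h2 hI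
  · exact isAcyclic_twoShiftGraph_of_disjoint_targets h1 h2 hJ
  · exact isAcyclic_twoShiftGraph_of_shift_ne h1 h2 hIJ hne
end

section
/- For fixed i < j, the probability that a sequence of independent fair coin bits C_0,…,C_{t+n−1} has an n-long repeat starting at positions i and j that agrees in all but at most one position (i.e., the Hamming distance between (C_i,…,C_{i+n−1}) and (C_j,…,C_{j+n−1}) is at most 1) is at most (n+1)·2^{−n}. -/
/-!
Encode a bit string `C` by its difference set `{ℓ < n | C (i + ℓ) ≠ C (j + ℓ)}` together with
the `t` bits outside the window `[j, j + n)`. Since `i < j`, this code is injective: the window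
can be read off from left to right, `C (j + ℓ)` being `C (i + ℓ)` flipped or not according to the
difference set, and `i + ℓ < j + ℓ` is already known. There are at most `n + 1` difference sets
of size at most one and `2 ^ t` choices of the outside bits.
-/

open Finset

theorem Finset.card_filter_card_le_one_powerset_le {α : Type*} [DecidableEq α] (s : Finset α) :
    #{x ∈ s.powerset | #x ≤ 1} ≤ #s + 1 := by
  have hsplit : {x ∈ s.powerset | #x ≤ 1} = s.powersetCard 0 ∪ s.powersetCard 1 := by
    ext x
    simp only [mem_filter, mem_powerset, mem_union, mem_powersetCard,
      Nat.le_one_iff_eq_zero_or_eq_one]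
    tauto
  calc #{x ∈ s.powerset | #x ≤ 1}
      ≤ #(s.powersetCard 0) + #(s.powersetCard 1) := hsplit ▸ card_union_le _ _
    _ = #s + 1 := by simp [card_powersetCard, add_comm]

theorem eq_of_eqOn_outside_window_of_diff_iff {C C' : ℕ → Bool} {i j n : ℕ} (hij : i < j)
    (houtside : ∀ a, (a < j ∨ j + n ≤ a) → C a = C' a)
    (hdiff : ∀ ℓ < n, (C (i + ℓ) ≠ C (j + ℓ) ↔ C' (i + ℓ) ≠ C' (j + ℓ))) : C = C' := by
  funext a
  induction a using Nat.strong_induction_on with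
  | _ a ih =>
  by_cases hwindow : j ≤ a ∧ a < j + n
  · obtain ⟨ℓ, rfl⟩ := Nat.exists_eq_add_of_le hwindow.1
    have hleft : C (i + ℓ) = C' (i + ℓ) := ih _ (by omega)
    have := hdiff ℓ (by omega)
    revert this hleft
    cases C (i + ℓ) <;> cases C (j + ℓ) <;> cases C' (i + ℓ) <;> cases C' (j + ℓ) <;> simp
  · exact houtside a (by omega)

def extendByFalse {m : ℕ} (C : Fin m → Bool) (a : ℕ) : Bool :=
  if h : a < m then C ⟨a, h⟩ else false

def skipWindow (j n k : ℕ) : ℕ :=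
  if k < j then k else k + n

theorem eq_of_diff_iff_of_eqOn_skipWindow {t n i j : ℕ} (hij : i < j) (hjt : j ≤ t)
    {C C' : Fin (t + n) → Bool}
    (houtside : ∀ k < t,
      extendByFalse C (skipWindow j n k) = extendByFalse C' (skipWindow j n k))
    (hdiff : ∀ ℓ < n, (extendByFalse C (i + ℓ) ≠ extendByFalse C (j + ℓ) ↔
      extendByFalse C' (i + ℓ) ≠ extendByFalse C' (j + ℓ))) : C = C' := by
  have hext : extendByFalse C = extendByFalse C' := by
    refine eq_of_eqOn_outside_window_of_diff_iff hij (fun a ha => ?_) hdiff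
    by_cases hat : a < t + n
    · have hskip : skipWindow j n (if a < j then a else a - n) = a := by
        unfold skipWindow; split_ifs <;> omega
      rw [← hskip]
      exact houtside _ (by split_ifs <;> omega)
    · simp [extendByFalse, hat]
  funext a
  simpa [extendByFalse] using congrFun hext a

theorem card_filter_card_diff_le_one_le {t n i j : ℕ} (hij : i < j) (hjt : j ≤ t) :
    #{C : Fin (t + n) → Bool |
      #{ℓ ∈ range n | extendByFalse C (i + ℓ) ≠ extendByFalse C (j + ℓ)} ≤ 1}
      ≤ (n + 1) * 2 ^ t := by
  let code (C : Fin (t + n) → Bool) : Finset ℕ × (Fin t → Bool) :=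
    ({ℓ ∈ range n | extendByFalse C (i + ℓ) ≠ extendByFalse C (j + ℓ)},
      fun k => extendByFalse C (skipWindow j n k))
  have hinj : Function.Injective code := fun C C' hcode => by
    simp only [code, Prod.mk.injEq, funext_iff] at hcode
    refine eq_of_diff_iff_of_eqOn_skipWindow hij hjt (fun k hk => hcode.2 ⟨k, hk⟩) ?_
    intro ℓ hℓ
    simpa [hℓ] using Finset.ext_iff.mp hcode.1 ℓ
  calc _ ≤ #({x ∈ (range n).powerset | #x ≤ 1} ×ˢ (univ : Finset (Fin t → Bool))) := by
        refine card_le_card_of_injOn code (fun C hC => ?_) hinj.injOn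
        simpa [code, filter_subset] using hC
    _ ≤ (n + 1) * 2 ^ t := by
        rw [card_product, card_univ, Fintype.card_fun, Fintype.card_bool, Fintype.card_fin]
        gcongr
        simpa using card_filter_card_le_one_powerset_le (range n)

/-- For fixed positions `i < j` with `j + n ≤ t + n`, the probability that the
two `n`-long windows of a fair coin sequence `C_0,…,C_{t+n-1}` starting at `i`
and at `j` are within Hamming distance `1` is at most `(n+1)·2^{-n}`:
the number of such bit strings, times `2^n`, is at most `(n+1)·2^{t+n}`. -/
theorem stmt11 (n t i j : ℕ) (hij : i < j) (hjn : j + n ≤ t + n) :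
    ((Finset.univ : Finset (Fin (t + n) → Bool)).filter
        (fun C =>
          let D : ℕ → Bool := fun a => if h : a < t + n then C ⟨a, h⟩ else false
          ((Finset.range n).filter (fun ℓ => D (i + ℓ) ≠ D (j + ℓ))).card ≤ 1)).card
        * 2 ^ n
      ≤ (n + 1) * 2 ^ (t + n) := by
  calc _ ≤ (n + 1) * 2 ^ t * 2 ^ n :=
        Nat.mul_le_mul_right _ (card_filter_card_diff_le_one_le hij (by omega))
    _ = (n + 1) * 2 ^ (t + n) := by rw [mul_assoc, ← pow_add]
end

section
/- For a sequence of t+n independent fair coin bits, the probability that there exists a (2n−1)-long repeat—i.e., positions i < j with (C_i,…,C_{i+2n−2}) = (C_j,…,C_{j+2n−2})—is at most 2t²/2^{2n}. -/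
/-!
Fix positions `i < j` whose windows of length `k = 2n - 1` fit in the string. A string with
`C (i + ℓ) = C (j + ℓ)` for all `ℓ < k` is determined by its letters off the window at `j`,
since each letter in that window is copied from a strictly earlier position; so at most
`2 ^ (t + n - k)` strings repeat at `(i, j)`, and `2 ^ (t + n - k) * 2 ^ (2n) ≤ 2 * 2 ^ (t + n)`.
A fitting window start satisfies `j ≤ t`, so there are at most `t²` pairs, and a union bound
finishes the proof.
-/

variable {α : Type*}

def padNat {L : ℕ} (C : Fin L → α) (d : α) (a : ℕ) : α :=
  if h : a < L then C ⟨a, h⟩ else d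

theorem eq_of_repeat_of_eq_off_window {f g : ℕ → α} {i j k : ℕ} (hij : i < j)
    (hf : ∀ ℓ < k, f (i + ℓ) = f (j + ℓ)) (hg : ∀ ℓ < k, g (i + ℓ) = g (j + ℓ))
    (hoff : ∀ m, m < j ∨ j + k ≤ m → f m = g m) : f = g := by
  funext m
  induction m using Nat.strong_induction_on with
  | _ m ih =>
    by_cases hm : j ≤ m ∧ m < j + k
    · obtain ⟨ℓ, rfl⟩ := Nat.exists_eq_add_of_le hm.1
      rw [← hf ℓ (by omega), ← hg ℓ (by omega), ih _ (by omega)]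
    · exact hoff m (by omega)

theorem card_filter_repeat_le [Fintype α] [DecidableEq α] (d : α) {L i j k : ℕ}
    (hij : i < j) (hfit : j + k ≤ L) :
    (Finset.univ.filter fun C : Fin L → α =>
        ∀ ℓ < k, padNat C d (i + ℓ) = padNat C d (j + ℓ)).card ≤
      Fintype.card α ^ (L - k) := by
  -- `skip` enumerates the positions outside the window `[j, j + k)`.
  let skip : Fin (L - k) → ℕ := fun a => if (a : ℕ) < j then a else a + k
  calc _ ≤ (Finset.univ : Finset (Fin (L - k) → α)).card := by
        refine Finset.card_le_card_of_injOn (fun C a => padNat C d (skip a))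
          (fun _ _ => Finset.mem_univ _) ?_
        intro C₁ h₁ C₂ h₂ hskip
        simp only [Finset.coe_filter, Finset.mem_univ, true_and, Set.mem_ofPred_eq] at h₁ h₂
        have hpad : padNat C₁ d = padNat C₂ d := by
          refine eq_of_repeat_of_eq_off_window hij h₁ h₂ fun m hm => ?_
          by_cases hL : m < L
          · let a : Fin (L - k) := ⟨if m < j then m else m - k, by split_ifs <;> omega⟩
            have ha : skip a = m := by
              simp only [skip, a]
              split_ifs <;> omega
            simpa only [ha] using congrFun hskip a
          · simp only [padNat, hL, dite_false]
        funext a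
        simpa [padNat] using congrFun hpad a
    _ = Fintype.card α ^ (L - k) := by simp

open scoped Classical in
/-- For `t+n` independent fair coin bits, the probability that there is a
`(2n−1)`-long repeat (positions `i < j` with the two `(2n−1)`-windows equal
and fitting in the sequence) is at most `2 t² / 2^{2n}`: the number of such
bit strings, times `2^{2n}`, is at most `2 t² · 2^{t+n}`. -/
theorem stmt19 (n t : ℕ) :
    ((Finset.univ : Finset (Fin (t + n) → Bool)).filter
        (fun C : Fin (t + n) → Bool =>
          let D : ℕ → Bool := fun a => if h : a < t + n then C ⟨a, h⟩ else false
          ∃ j ∈ Finset.range (t + n), ∃ i ∈ Finset.range j,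
            j + (2 * n - 1) ≤ t + n ∧
            ∀ ℓ ∈ Finset.range (2 * n - 1), D (i + ℓ) = D (j + ℓ))).card
        * 2 ^ (2 * n)
      ≤ 2 * t ^ 2 * 2 ^ (t + n) := by
  set k := 2 * n - 1
  let A : ℕ × ℕ → Finset (Fin (t + n) → Bool) := fun p =>
    Finset.univ.filter fun C => ∀ ℓ < k, padNat C false (p.1 + ℓ) = padNat C false (p.2 + ℓ)
  let P := (Finset.range t ×ˢ Finset.Icc 1 t).filter fun p => p.1 < p.2 ∧ p.2 + k ≤ t + n
  have hA : ∀ p ∈ P, (A p).card * 2 ^ (2 * n) ≤ 2 * 2 ^ (t + n) := by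
    intro p hp
    simp only [Finset.mem_filter, P] at hp
    calc (A p).card * 2 ^ (2 * n) ≤ 2 ^ (t + n - k) * 2 ^ (2 * n) :=
          Nat.mul_le_mul_right _ (card_filter_repeat_le false hp.2.1 hp.2.2)
      _ ≤ 2 * 2 ^ (t + n) := by
          rw [← pow_add, ← pow_succ']
          exact Nat.pow_le_pow_right two_pos (by omega)
  have hP : P.card ≤ t ^ 2 :=
    (Finset.card_filter_le _ _).trans (by simp [sq])
  calc _ ≤ (P.biUnion A).card * 2 ^ (2 * n) := by
        gcongr
        intro C hC
        simp only [Finset.mem_filter, Finset.mem_univ, true_and, Finset.mem_range] at hC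
        obtain ⟨j, -, i, hij, hfit, hrep⟩ := hC
        simp only [Finset.mem_biUnion, Finset.mem_filter, Finset.mem_product, Finset.mem_range,
          Finset.mem_Icc, Finset.mem_univ, true_and, Prod.exists, P, A]
        exact ⟨i, j, ⟨⟨by omega, by omega, by omega⟩, hij, hfit⟩, hrep⟩
    _ ≤ ∑ p ∈ P, (A p).card * 2 ^ (2 * n) := by
        rw [← Finset.sum_mul]
        exact Nat.mul_le_mul_right _ Finset.card_biUnion_le
    _ ≤ P.card * (2 * 2 ^ (t + n)) := Finset.sum_le_card_nsmul _ _ _ hA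
    _ ≤ 2 * t ^ 2 * 2 ^ (t + n) := by
        rw [mul_comm 2 (t ^ 2), mul_assoc]
        exact Nat.mul_le_mul_right _ hP
end
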